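/- Let P be an NN-bisimulation for a neural network N and let v be a P-consistent input valuation. Then the input-output semantics commute with abstraction: α([[N]](v)) = [[N/P]](α(v)), where [[N]] is the composition of all k layer semantics. -/

import Mathlib

/-- One-step (layer) semantics of a neural network layer. -/
def layerSem {α β : Type*} [Fintype α] (W : α → β → ℝ) (b : β → ℝ) (A : β → ℝ → ℝ)
    (v : α → ℝ) : β → ℝ :=
  fun s' => A s' ((∑ s, W s s' * v s) + b s')

open Classical in
/-- Pre-sum of a set of previous-layer nodes into a node `s'`. -/
noncomputable def preSum {α β : Type*} [Fintype α] (W : α → β → ℝ) (c : Set α) (s' : β) : ℝ :=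
  ∑ s ∈ Finset.univ.filter (fun s => s ∈ c), W s s'

/-- A valuation is `P`-consistent if it is constant on classes. -/
def consistent {α : Type*} (P : Setoid α) (v : α → ℝ) : Prop :=
  ∀ s₁ s₂, P.r s₁ s₂ → v s₁ = v s₂

/-- One layer of the NN-bisimulation condition. -/
def isBisimStep {α β : Type*} [Fintype α] (W : α → β → ℝ) (b : β → ℝ) (A : β → ℝ → ℝ)
    (Pp : Setoid α) (Pn : Setoid β) : Prop :=
  ∀ s₁ s₂ : β, Pn.r s₁ s₂ →
    A s₁ = A s₂ ∧ b s₁ = b s₂ ∧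
    ∀ t : α, preSum W {x | Pp.r x t} s₁ = preSum W {x | Pp.r x t} s₂

/-- One layer of the δ-NN-bisimulation condition. -/
def isDeltaBisimStep {α β : Type*} [Fintype α] (W : α → β → ℝ) (b : β → ℝ) (A : β → ℝ → ℝ)
    (Pp : Setoid α) (Pn : Setoid β) (δ : ℝ) : Prop :=
  ∀ s₁ s₂ : β, Pn.r s₁ s₂ →
    A s₁ = A s₂ ∧ |b s₁ - b s₂| ≤ δ ∧
    ∀ t : α, |preSum W {x | Pp.r x t} s₁ - preSum W {x | Pp.r x t} s₂| ≤ δ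

/-- Semantics of the composition of the first `i` layers of a network. -/
def netSem (S : ℕ → Type) [∀ i, Fintype (S i)] (W : ∀ i, S i → S (i+1) → ℝ)
    (b : ∀ i, S (i+1) → ℝ) (A : ∀ i, S (i+1) → ℝ → ℝ) : (i : ℕ) → (S 0 → ℝ) → S i → ℝ
  | 0, v => v
  | (i+1), v => layerSem (W i) (b i) (A i) (netSem S W b A i v)

/-- Quotient weights: pre-sum of a class into a representative. -/
noncomputable def qW {α β : Type*} [Fintype α] (Pp : Setoid α) (Pn : Setoid β)
    (W : α → β → ℝ) (c : Quotient Pp) (d : Quotient Pn) : ℝ :=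
  preSum W {x | Quotient.mk Pp x = c} d.out

/-- Quotient bias via representative. -/
noncomputable def qb {β : Type*} (Pn : Setoid β) (b : β → ℝ) (d : Quotient Pn) : ℝ := b d.out

/-- Quotient activation via representative. -/
noncomputable def qA {β : Type*} (Pn : Setoid β) (A : β → ℝ → ℝ) (d : Quotient Pn) : ℝ → ℝ :=
  A d.out

/-- Abstraction of a `P`-consistent valuation. -/
noncomputable def absVal {α : Type*} (P : Setoid α) (v : α → ℝ) (c : Quotient P) : ℝ := v c.out

/-- `vh` is an ε-abstraction of `v`. -/
def isEpsAbs {α : Type*} (P : Setoid α) (ε : ℝ) (v : α → ℝ) (vh : Quotient P → ℝ) : Prop :=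
  ∀ s : α, |vh (Quotient.mk P s) - v s| ≤ ε

/-- `v` is (ε,P)-consistent. -/
def epsConsistent {α : Type*} (P : Setoid α) (ε : ℝ) (v : α → ℝ) : Prop :=
  ∀ s₁ s₂, P.r s₁ s₂ → |v s₁ - v s₂| ≤ ε

/-!
Only consistency of the valuation is needed for abstraction to commute with a single layer:
the quotient network reads weights, bias and activation off the representative `d.out`, and
regrouping `∑ s, W s d.out * u s` by classes of the previous layer turns it into the quotient
pre-activation. The bisimulation conditions are what keep the valuations consistent from layer
to layer, so the single-layer statement can be iterated along the network.
-/

section Layer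

variable {α β : Type*}

lemma setOf_mk_eq_eq_setOf_rel_out (P : Setoid α) (c : Quotient P) :
    {x | Quotient.mk P x = c} = {x | P.r x c.out} :=
  Set.ext fun _ => Quotient.mk_eq_iff_out

lemma absVal_mk {P : Setoid α} {u : α → ℝ} (hu : consistent P u) (s : α) :
    absVal P u (Quotient.mk P s) = u s :=
  hu _ _ (Quotient.mk_out s)

variable [Fintype α]

open Classical in
lemma sum_mul_eq_sum_preSum_mul_absVal (P : Setoid α) [Fintype (Quotient P)] (W : α → β → ℝ)
    {u : α → ℝ} (hu : consistent P u) (s' : β) :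
    ∑ s, W s s' * u s = ∑ c : Quotient P, preSum W {x | Quotient.mk P x = c} s' * absVal P u c := by
  rw [← Finset.sum_fiberwise Finset.univ (Quotient.mk P)]
  refine Finset.sum_congr rfl fun c _ => ?_
  simp only [preSum, Finset.sum_mul]
  refine Finset.sum_congr (by simp) fun s hs => ?_
  obtain rfl : Quotient.mk P s = c := by simpa using hs
  rw [absVal_mk hu]

lemma layerSem_consistent {Pp : Setoid α} {Pn : Setoid β} [Fintype (Quotient Pp)]
    {W : α → β → ℝ} {b : β → ℝ} {A : β → ℝ → ℝ} (hbis : isBisimStep W b A Pp Pn)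
    {u : α → ℝ} (hu : consistent Pp u) :
    consistent Pn (layerSem W b A u) := by
  intro s₁ s₂ h
  obtain ⟨hA, hb, hpre⟩ := hbis s₁ s₂ h
  simp only [layerSem, hA, hb, sum_mul_eq_sum_preSum_mul_absVal Pp W hu,
    setOf_mk_eq_eq_setOf_rel_out, hpre]

lemma absVal_layerSem {Pp : Setoid α} (Pn : Setoid β) [Fintype (Quotient Pp)]
    (W : α → β → ℝ) (b : β → ℝ) (A : β → ℝ → ℝ) {u : α → ℝ} (hu : consistent Pp u) :
    absVal Pn (layerSem W b A u) = layerSem (qW Pp Pn W) (qb Pn b) (qA Pn A) (absVal Pp u) := by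
  funext d
  simp only [absVal, layerSem, qA, qb, qW, sum_mul_eq_sum_preSum_mul_absVal Pp W hu]

end Layer

lemma netSem_consistent {S : ℕ → Type} [∀ i, Fintype (S i)]
    {P : ∀ i, Setoid (S i)} [∀ i, Fintype (Quotient (P i))]
    {W : ∀ i, S i → S (i+1) → ℝ} {b : ∀ i, S (i+1) → ℝ} {A : ∀ i, S (i+1) → ℝ → ℝ}
    (hbis : ∀ i, isBisimStep (W i) (b i) (A i) (P i) (P (i+1)))
    {v : S 0 → ℝ} (hv : consistent (P 0) v) (k : ℕ) :
    consistent (P k) (netSem S W b A k v) := by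
  induction k with
  | zero => exact hv
  | succ k ih => exact layerSem_consistent (hbis k) ih

/-- abstraction commutes with the full input-output semantics:
`α([[N]](v)) = [[N/P]](α(v))` for `P`-consistent input `v`. -/
theorem quotient_net_commutes (S : ℕ → Type) [∀ i, Fintype (S i)]
    (P : ∀ i, Setoid (S i)) [∀ i, Fintype (Quotient (P i))]
    (W : ∀ i, S i → S (i+1) → ℝ) (b : ∀ i, S (i+1) → ℝ) (A : ∀ i, S (i+1) → ℝ → ℝ)
    (hbis : ∀ i, isBisimStep (W i) (b i) (A i) (P i) (P (i+1)))
    (k : ℕ) (v : S 0 → ℝ) (hv : consistent (P 0) v) :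
    absVal (P k) (netSem S W b A k v) =
      netSem (fun i => Quotient (P i)) (fun i => qW (P i) (P (i+1)) (W i))
        (fun i => qb (P (i+1)) (b i)) (fun i => qA (P (i+1)) (A i)) k (absVal (P 0) v) := by
  induction k with
  | zero => rfl
  | succ k ih =>
    rw [netSem, netSem, ← ih]
    exact absVal_layerSem (P (k+1)) (W k) (b k) (A k) (netSem_consistent hbis hv k)
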